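/- For every pair of real numbers a, b with |b| < π/2, there exist z, w in the open unit disk such that a + 4bi = Log(1+z) − 3 Log(1+w). Consequently the set {Log(1+z) − 3 Log(1+w) : |z| < 1, |w| < 1} contains the horizontal strip {ζ : |Im ζ| < 2π}. -/

import Mathlib

open Real Complex

set_option maxHeartbeats 800000

lemma LV_key (b x : ℝ) (hb : |b| < π / 2)
    (hx : x < Real.log (2 * Real.cos b)) :
    ‖Complex.exp (x + b * Complex.I) - 1‖ < 1 ∧
      Complex.log (1 + (Complex.exp (x + b * Complex.I) - 1)) = x + b * Complex.I := by
  have hb1 : -(π/2) < b := neg_lt_of_abs_lt hb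
  have hb2 : b < π/2 := lt_of_abs_lt hb
  have hcos : 0 < Real.cos b := Real.cos_pos_of_mem_Ioo ⟨hb1, hb2⟩
  have hexp : Real.exp x < 2 * Real.cos b := by
    calc Real.exp x < Real.exp (Real.log (2 * Real.cos b)) := Real.exp_lt_exp.mpr hx
    _ = 2 * Real.cos b := Real.exp_log (by linarith)
  have hre : (x + b * Complex.I : ℂ).re = x := by simp
  have him : (x + b * Complex.I : ℂ).im = b := by simp
  have habs : ‖Complex.exp (x + b * Complex.I)‖ = Real.exp x := by
    rw [Complex.norm_exp, hre]
  constructor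
  · have h1 : ‖Complex.exp (x + b * Complex.I) - 1‖ ^ 2 < 1 := by
      rw [Complex.sq_norm, Complex.normSq_sub, ← Complex.sq_norm, habs]
      have h2 : (Complex.exp (x + b * Complex.I) * (starRingEnd ℂ) 1).re
          = Real.exp x * Real.cos b := by
        rw [map_one, mul_one, Complex.exp_re, hre, him]
      rw [h2]
      simp only [Complex.normSq_one]
      have hexp0 : (0:ℝ) < Real.exp x := Real.exp_pos x
      nlinarith
    have h0 : (0:ℝ) ≤ ‖Complex.exp (x + b * Complex.I) - 1‖ :=
      norm_nonneg _
    nlinarith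
  · rw [add_sub_cancel, Complex.log_exp]
    · rw [him]; linarith [Real.pi_pos]
    · rw [him]; linarith [Real.pi_pos]

theorem LV_strip (a b : ℝ) (hb : |b| < π / 2) :
    (∃ z w : ℂ, ‖z‖ < 1 ∧ ‖w‖ < 1 ∧
      (a : ℂ) + 4 * b * Complex.I = Complex.log (1 + z) - 3 * Complex.log (1 + w)) ∧
    {ζ : ℂ | |ζ.im| < 2 * π} ⊆
      {ζ : ℂ | ∃ z w : ℂ, ‖z‖ < 1 ∧ ‖w‖ < 1 ∧
        ζ = Complex.log (1 + z) - 3 * Complex.log (1 + w)} := by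
  have main : ∀ a b : ℝ, |b| < π / 2 →
      ∃ z w : ℂ, ‖z‖ < 1 ∧ ‖w‖ < 1 ∧
        (a : ℂ) + 4 * b * Complex.I = Complex.log (1 + z) - 3 * Complex.log (1 + w) := by
    intro a b hb
    set c := Real.log (2 * Real.cos b) with hc
    set x₁ := min c (a + 3 * c) - 1 with hx₁def
    set x₂ := (x₁ - a) / 3 with hx₂def
    have hx₁ : x₁ < c := by
      have := min_le_left c (a + 3 * c); linarith
    have hx₂ : x₂ < c := by
      have := min_le_right c (a + 3 * c)
      rw [hx₂def]; linarith
    have hbneg : |(-b)| < π / 2 := by rwa [abs_neg]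
    have hcb : Real.cos (-b) = Real.cos b := Real.cos_neg b
    obtain ⟨h1, h2⟩ := LV_key b x₁ hb hx₁
    obtain ⟨h3, h4⟩ := LV_key (-b) x₂ hbneg (by rwa [hcb])
    refine ⟨Complex.exp ((x₁ : ℂ) + (b : ℝ) * Complex.I) - 1,
      Complex.exp ((x₂ : ℂ) + ((-b : ℝ) : ℂ) * Complex.I) - 1, h1, h3, ?_⟩
    rw [h2, h4]
    have : (x₁ : ℂ) = a + 3 * x₂ := by
      have : (x₁ : ℝ) = a + 3 * x₂ := by rw [hx₂def]; ring
      exact_mod_cast congrArg (Complex.ofReal) this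
    rw [this]; push_cast; ring
  refine ⟨main a b hb, ?_⟩
  intro ζ hζ
  have hb' : |ζ.im / 4| < π / 2 := by
    rw [abs_div]
    simp only [Set.mem_setOf_eq] at hζ
    rw [abs_of_pos (by norm_num : (0:ℝ) < 4)]
    linarith
  obtain ⟨z, w, hz, hw, heq⟩ := main ζ.re (ζ.im / 4) hb'
  refine ⟨z, w, hz, hw, ?_⟩
  rw [← heq]
  have : (ζ.re : ℂ) + 4 * (ζ.im / 4 : ℝ) * Complex.I = ζ.re + ζ.im * Complex.I := by
    push_cast; ring
  rw [this, Complex.re_add_im]
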